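/- arXiv:1207.0909 — 2 statements merged into one kernel-verified Lean document; each statement's English description precedes it below -/
import Mathlib

section
/- For b ∈ (-1/2, 1/2) and z ∈ ℂ with z ∉ (ℤ + 1/2)·i, one has e^{2πbz}/cosh(πz) = -(1/π)·Σ_{r ∈ ℤ+1/2} e^{2πir(b+1/2)}/(z - ir), where the sum is over half-integers r and converges (as a symmetric limit). -/
/-!
Write `r = n + 1/2`. Since `e^{-2πir} = -1`, integrating `e^{2π(ir - z)u}` over the period
`[b - 1/2, b + 1/2]` gives
`cosh(πz) e^{2πir(b + 1/2)} / (z - ir) = -π e^{2πbz} ∫ e^{-2πzu} e^{2πiru} du`, so the partial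
sums equal `e^{2πbz} / cosh(πz)` times `∫ e^{-2πzu} K_N(u) du`, where
`K_N(u) = ∑_{|r| < N} e^{2πiru} = sin(2πNu) / sin(πu)`. Split `e^{-2πzu} = e^{πiu} + ρ(u)`: the
first part integrates against `K_N` to exactly `1` (only `r = -1/2` survives), and since `ρ(0) = 0`
the second is `∫ (ρ(u) / sin(πu)) sin(2πNu) du` with `ρ / sin(π·)` continuous on
`[b - 1/2, b + 1/2] ⊂ (-1, 1)`, which tends to `0` by the Riemann–Lebesgue lemma.
-/

open Complex Filter MeasureTheory Set
open scoped Real FourierTransform Topology Interval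

section RiemannLebesgue

variable {E : Type*} [NormedAddCommGroup E] [NormedSpace ℂ E]

theorem tendsto_intervalIntegral_fourierChar_smul_cocompact (f : ℝ → E) (a b : ℝ) :
    Tendsto (fun w : ℝ => ∫ v in a..b, 𝐞 (-(v * w)) • f v) (cocompact ℝ) (𝓝 0) := by
  have h := (Real.tendsto_integral_exp_smul_cocompact ((Ι a b).indicator f)).const_smul
    (if a ≤ b then (1 : ℝ) else -1)
  rw [smul_zero] at h
  refine h.congr fun w => ?_
  rw [intervalIntegral.intervalIntegral_eq_integral_uIoc, ← integral_indicator measurableSet_uIoc]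
  simp_rw [indicator_smul]

theorem tendsto_intervalIntegral_sin_smul_cocompact {f : ℝ → E} {a b : ℝ}
    (hf : IntervalIntegrable f volume a b) :
    Tendsto (fun w : ℝ => ∫ v in a..b, Real.sin (2 * π * w * v) • f v) (cocompact ℝ) (𝓝 0) := by
  have hR := tendsto_intervalIntegral_fourierChar_smul_cocompact f a b
  have h := ((hR.comp (Homeomorph.neg ℝ).isClosedEmbedding.tendsto_cocompact).sub hR).const_smul
    (2 * I)⁻¹
  rw [sub_zero, smul_zero] at h
  refine h.congr fun w => ?_
  simp only [Function.comp_apply, Homeomorph.coe_neg, neg_neg, mul_neg, Circle.smul_def,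
    Real.fourierChar_apply]
  rw [← intervalIntegral.integral_sub (hf.continuousOn_smul (by fun_prop))
    (hf.continuousOn_smul (by fun_prop)), ← intervalIntegral.integral_smul]
  refine intervalIntegral.integral_congr fun v _ => ?_
  rw [← sub_smul, smul_smul, ← Complex.coe_smul, Complex.ofReal_sin, Complex.sin]
  congr 1
  rw [mul_inv, Complex.inv_I]
  push_cast
  ring_nf

end RiemannLebesgue

section DivSinPi

variable {E : Type*} [NormedAddCommGroup E] [NormedSpace ℝ E]

theorem Real.sin_pi_mul_ne_zero_of_mem_Ioo {u : ℝ} (hu : u ∈ Ioo (-1) 1) (hu0 : u ≠ 0) :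
    Real.sin (π * u) ≠ 0 := by
  rw [Ne, Real.sin_eq_zero_iff_of_lt_of_lt (by nlinarith [Real.pi_pos, hu.1])
    (by nlinarith [Real.pi_pos, hu.2])]
  simp [Real.pi_ne_zero, hu0]

theorem dslope_sin_pi_mul_ne_zero {u : ℝ} (hu : u ∈ Ioo (-1) 1) :
    dslope (fun v => Real.sin (π * v)) 0 u ≠ 0 := by
  rcases eq_or_ne u 0 with rfl | hu0
  · have hd : HasDerivAt (fun v => Real.sin (π * v)) π 0 := by
      simpa using ((hasDerivAt_id (0 : ℝ)).const_mul π).sin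
    rw [dslope_same, hd.deriv]
    exact Real.pi_ne_zero
  · rw [dslope_of_ne _ hu0, slope_def_field]
    simpa [hu0] using Real.sin_pi_mul_ne_zero_of_mem_Ioo hu hu0

/-- `f u / sin (π u)`, extended at `u = 0` by the quotient of the derivatives. -/
noncomputable def divSinPi (f : ℝ → E) (u : ℝ) : E :=
  (dslope (fun v => Real.sin (π * v)) 0 u)⁻¹ • dslope f 0 u

theorem continuousOn_divSinPi {f : ℝ → E} (hf : ContinuousOn f (Ioo (-1) 1))
    (hf0 : DifferentiableAt ℝ f 0) : ContinuousOn (divSinPi f) (Ioo (-1) 1) := by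
  have hnhds : Ioo (-1 : ℝ) 1 ∈ 𝓝 0 := Ioo_mem_nhds (by norm_num) (by norm_num)
  refine ContinuousOn.smul ?_ ((continuousOn_dslope hnhds).2 ⟨hf, hf0⟩)
  refine ContinuousOn.inv₀ ((continuousOn_dslope hnhds).2 ⟨by fun_prop, by fun_prop⟩) ?_
  exact fun u hu => dslope_sin_pi_mul_ne_zero hu

theorem sin_smul_divSinPi {f : ℝ → E} (hf0 : f 0 = 0) {u : ℝ} (hu : u ∈ Ioo (-1) 1) :
    Real.sin (π * u) • divSinPi f u = f u := by
  rcases eq_or_ne u 0 with rfl | hu0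
  · simp [hf0]
  · have hsin := Real.sin_pi_mul_ne_zero_of_mem_Ioo hu hu0
    simp only [divSinPi, dslope_of_ne _ hu0, slope, smul_smul, vsub_eq_sub, hf0, mul_zero,
      Real.sin_zero, sub_zero, smul_eq_mul]
    rw [show Real.sin (π * u) * ((u⁻¹ * Real.sin (π * u))⁻¹ * u⁻¹) = 1 by field_simp, one_smul]

end DivSinPi

theorem Int.sum_Ico_sub {M : Type*} [AddCommGroup M] (f : ℤ → M) {a b : ℤ} (hab : a ≤ b) :
    ∑ n ∈ Finset.Ico a b, (f (n + 1) - f n) = f b - f a := by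
  induction b, hab using Int.leInduction with
  | base => simp
  | succ b hab ih =>
    rw [← Finset.insert_Ico_right_eq_Ico_add_one hab, Finset.sum_insert Finset.right_notMem_Ico, ih]
    abel

theorem integral_exp_two_pi_I_int_mul (k : ℤ) (a : ℝ) :
    ∫ u in a..a + 1, cexp (2 * π * I * k * u) = if k = 0 then 1 else 0 := by
  split_ifs with hk
  · simp [hk]
  · have hc : 2 * π * I * k ≠ 0 := by simp [Real.pi_ne_zero, hk]
    have hperiod : 2 * π * I * k * ((a + 1 : ℝ) : ℂ) = 2 * π * I * k * a + k * (2 * π * I) := by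
      push_cast; ring
    rw [integral_exp_mul_complex hc, hperiod, exp_add, exp_int_mul_two_pi_mul_I, mul_one,
      sub_self, zero_div]

noncomputable def halfIntDirichletKernel (N : ℕ) (u : ℝ) : ℂ :=
  ∑ n ∈ Finset.Ico (-(N : ℤ)) N, cexp (2 * π * I * (n + 1 / 2) * u)

theorem continuous_halfIntDirichletKernel (N : ℕ) : Continuous (halfIntDirichletKernel N) := by
  unfold halfIntDirichletKernel
  fun_prop

theorem sin_mul_halfIntDirichletKernel (N : ℕ) (u : ℝ) :
    Real.sin (π * u) * halfIntDirichletKernel N u = Real.sin (2 * π * N * u) := by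
  have hterm : ∀ n : ℤ, (Real.sin (π * u) : ℂ) * cexp (2 * π * I * (n + 1 / 2) * u) =
      (cexp (2 * π * I * (n + 1 : ℤ) * u) - cexp (2 * π * I * n * u)) * (-I / 2) := by
    intro n
    have hup : cexp (2 * π * I * (n + 1 : ℤ) * u) =
        cexp (2 * π * I * (n + 1 / 2) * u) * cexp (π * u * I) := by
      rw [← exp_add]; push_cast; ring_nf
    have hdown : cexp (2 * π * I * n * u) =
        cexp (2 * π * I * (n + 1 / 2) * u) * cexp (-(π * u) * I) := by
      rw [← exp_add]; ring_nf
    rw [hup, hdown, ofReal_sin, sin]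
    push_cast
    ring
  rw [halfIntDirichletKernel, Finset.mul_sum, Finset.sum_congr rfl fun n _ => hterm n,
    ← Finset.sum_mul, Int.sum_Ico_sub (fun n : ℤ => cexp (2 * π * I * n * u)) (by omega),
    ofReal_sin, sin]
  push_cast
  ring_nf

theorem integral_exp_pi_I_mul_halfIntDirichletKernel {N : ℕ} (hN : 1 ≤ N) (a : ℝ) :
    ∫ u in a..a + 1, cexp (π * I * u) * halfIntDirichletKernel N u = 1 := by
  have hterm : ∀ (n : ℤ) (u : ℝ), cexp (π * I * u) * cexp (2 * π * I * (n + 1 / 2) * u) =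
      cexp (2 * π * I * (n + 1 : ℤ) * u) := by
    intro n u
    rw [← exp_add]; push_cast; ring_nf
  simp_rw [halfIntDirichletKernel, Finset.mul_sum, hterm]
  rw [intervalIntegral.integral_finsetSum fun n _ =>
    (by fun_prop : Continuous _).intervalIntegrable _ _]
  simp_rw [integral_exp_two_pi_I_int_mul, add_eq_zero_iff_eq_neg]
  rw [Finset.sum_ite_eq', if_pos (by simp; omega)]

theorem tendsto_integral_exp_mul_halfIntDirichletKernel (z : ℂ) {b : ℝ}
    (hb : b ∈ Ioo (-(1 / 2)) (1 / 2)) :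
    Tendsto (fun N : ℕ => ∫ u in (b - 1 / 2)..(b + 1 / 2),
      cexp (-2 * π * z * u) * halfIntDirichletKernel N u) atTop (𝓝 1) := by
  set ρ : ℝ → ℂ := fun u => cexp (-2 * π * z * u) - cexp (π * I * u)
  have hsub : [[b - 1 / 2, b + 1 / 2]] ⊆ Ioo (-1) 1 := by
    rw [uIcc_of_le (by linarith)]
    exact Icc_subset_Ioo (by linarith [hb.1]) (by linarith [hb.2])
  have hψ : ContinuousOn (divSinPi ρ) [[b - 1 / 2, b + 1 / 2]] :=
    (continuousOn_divSinPi (by fun_prop) (by fun_prop)).mono hsub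
  have hsplit : ∀ N : ℕ, 1 ≤ N → ∫ u in (b - 1 / 2)..(b + 1 / 2),
      cexp (-2 * π * z * u) * halfIntDirichletKernel N u =
        1 + ∫ u in (b - 1 / 2)..(b + 1 / 2), Real.sin (2 * π * N * u) • divSinPi ρ u := by
    intro N hN
    have hpoint : EqOn (fun u : ℝ => cexp (-2 * π * z * u) * halfIntDirichletKernel N u)
        (fun u => cexp (π * I * u) * halfIntDirichletKernel N u +
          Real.sin (2 * π * N * u) • divSinPi ρ u) [[b - 1 / 2, b + 1 / 2]] := by
      intro u hu
      have hρ := sin_smul_divSinPi (f := ρ) (by simp [ρ]) (hsub hu)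
      simp only [ρ, real_smul] at hρ ⊢
      rw [← sin_mul_halfIntDirichletKernel]
      linear_combination -halfIntDirichletKernel N u * hρ
    rw [intervalIntegral.integral_congr hpoint, intervalIntegral.integral_add
      (((by fun_prop : Continuous fun u : ℝ => cexp (π * I * u)).fun_mul
        (continuous_halfIntDirichletKernel N)).intervalIntegrable _ _)
      (hψ.intervalIntegrable.continuousOn_smul
        (f := fun u : ℝ => Real.sin (2 * π * N * u)) (by fun_prop))]
    convert congrArg (· + _) (integral_exp_pi_I_mul_halfIntDirichletKernel hN (b - 1 / 2)) using 3
    ring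
  have hRL := (tendsto_intervalIntegral_sin_smul_cocompact hψ.intervalIntegrable).comp
    (tendsto_natCast_atTop_atTop.mono_right atTop_le_cocompact)
  rw [← add_zero (1 : ℂ)]
  refine (tendsto_const_nhds.add hRL).congr' ?_
  filter_upwards [eventually_ge_atTop 1] with N hN
  exact (hsplit N hN).symm

theorem cosh_pi_mul_ne_zero {z : ℂ} (hz : ∀ n : ℤ, z ≠ (n + 1 / 2) * I) : cosh (π * z) ≠ 0 := by
  rw [← cos_mul_I, Ne, cos_eq_zero_iff]
  rintro ⟨k, hk⟩
  apply hz (-k - 1)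
  have hπ : (π : ℂ) ≠ 0 := ofReal_ne_zero.mpr Real.pi_ne_zero
  apply mul_left_cancel₀ (mul_ne_zero hπ I_ne_zero)
  push_cast
  linear_combination hk + (π * (k + 1/2)) * I_sq

theorem cosh_mul_exp_div_sub_eq_integral {z : ℂ} {n : ℤ} (hzn : z ≠ (n + 1 / 2) * I) (b : ℝ) :
    cosh (π * z) * (cexp (2 * π * I * (n + 1 / 2) * (b + 1 / 2)) / (z - (n + 1 / 2) * I)) =
      -π * cexp (2 * π * b * z) *
        ∫ u in (b - 1 / 2)..(b + 1 / 2),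
          cexp (-2 * π * z * u) * cexp (2 * π * I * (n + 1 / 2) * u) := by
  set c : ℂ := -2 * π * (z - (n + 1 / 2) * I) with hc_def
  have hπ : (π : ℂ) ≠ 0 := ofReal_ne_zero.mpr Real.pi_ne_zero
  have hzn' : z - (n + 1 / 2) * I ≠ 0 := sub_ne_zero.mpr hzn
  have hc : c ≠ 0 := mul_ne_zero (mul_ne_zero (by norm_num) hπ) hzn'
  have hexp : ∀ u : ℝ,
      cexp (-2 * π * z * u) * cexp (2 * π * I * (n + 1 / 2) * u) = cexp (c * u) := by
    intro u; rw [hc_def, ← exp_add]; ring_nf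
  simp_rw [hexp]
  rw [integral_exp_mul_complex hc]
  set P := cexp (2 * π * I * (n + 1 / 2) * b)
  set T := cexp (π * I * (n + 1 / 2))
  have hT : cexp (-(2 * π * I * (n + 1 / 2))) = -1 := by
    rw [show -(2 * π * I * (n + 1 / 2)) = (-n : ℤ) * (2 * π * I) + -(π * I) by push_cast; ring,
      exp_add, exp_int_mul_two_pi_mul_I, exp_neg, exp_pi_mul_I]
    norm_num
  have h1 : cexp (2 * π * I * (n + 1 / 2) * (b + 1 / 2)) = P * T := by
    rw [← exp_add]; ring_nf
  have h2 : cexp (c * ((b + 1 / 2 : ℝ) : ℂ)) =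
      P * T * cexp (-(2 * π * b * z)) * cexp (-(π * z)) := by
    rw [hc_def, ← exp_add, ← exp_add, ← exp_add]; push_cast; ring_nf
  have h3 : cexp (c * ((b - 1 / 2 : ℝ) : ℂ)) =
      P * T * cexp (-(2 * π * b * z)) * cexp (π * z) * cexp (-(2 * π * I * (n + 1 / 2))) := by
    rw [hc_def, ← exp_add, ← exp_add, ← exp_add, ← exp_add]; push_cast; ring_nf
  rw [h1, h2, h3, hT, cosh, hc_def, exp_neg (2 * π * b * z)]
  field_simp
  ring

theorem cosh_mul_sum_exp_div_sub_eq_integral {z : ℂ} (hz : ∀ n : ℤ, z ≠ (n + 1 / 2) * I)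
    (N : ℕ) (b : ℝ) :
    cosh (π * z) * ∑ n ∈ Finset.Ico (-(N : ℤ)) N,
        cexp (2 * π * I * (n + 1 / 2) * (b + 1 / 2)) / (z - (n + 1 / 2) * I) =
      -π * cexp (2 * π * b * z) *
        ∫ u in (b - 1 / 2)..(b + 1 / 2), cexp (-2 * π * z * u) * halfIntDirichletKernel N u := by
  simp_rw [Finset.mul_sum, cosh_mul_exp_div_sub_eq_integral (hz _), halfIntDirichletKernel,
    Finset.mul_sum]
  rw [intervalIntegral.integral_finsetSum fun n _ =>
    (by fun_prop : Continuous _).intervalIntegrable _ _, Finset.mul_sum]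

/-- Partial fraction expansion (Lemma 1.19 of Zwegers): for `b ∈ (-1/2, 1/2)` and
`z ∈ ℂ` not of the form `ir` with `r ∈ ℤ + 1/2`,
`e^{2πbz}/cosh(πz) = -(1/π) Σ_{r∈ℤ+1/2} e^{2πir(b+1/2)}/(z-ir)`,
the sum being a symmetric limit over half-integers `r` with `|r| ≤ N`. -/
theorem stmt7 (b : ℝ) (hb : b ∈ Set.Ioo (-(1/2) : ℝ) (1/2)) (z : ℂ)
    (hz : ∀ n : ℤ, z ≠ ((n : ℂ) + 1/2) * Complex.I) :
    Tendsto
      (fun N : ℕ =>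
        -(1 / (Real.pi : ℂ)) *
          ∑ n ∈ Finset.Icc (-(N : ℤ)) ((N : ℤ) - 1),
            Complex.exp (2 * Real.pi * Complex.I * ((n : ℂ) + 1/2) * ((b : ℂ) + 1/2)) /
              (z - ((n : ℂ) + 1/2) * Complex.I))
      atTop
      (nhds (Complex.exp (2 * Real.pi * (b : ℂ) * z) / Complex.cosh (Real.pi * z))) := by
  have hcosh := cosh_pi_mul_ne_zero hz
  have hsolve : ∀ S J : ℂ, cosh (π * z) * S = -π * cexp (2 * π * b * z) * J →
      -(1 / (π : ℂ)) * S = cexp (2 * π * b * z) / cosh (π * z) * J := by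
    intro S J h
    field_simp
    linear_combination (norm := ring_nf) -h
  have hlim := (tendsto_integral_exp_mul_halfIntDirichletKernel z hb).const_mul
    (cexp (2 * π * b * z) / cosh (π * z))
  rw [mul_one] at hlim
  refine hlim.congr fun N => (hsolve _ _ ?_).symm
  rw [Finset.Icc_sub_one_right_eq_Ico]
  exact cosh_mul_sum_exp_div_sub_eq_integral hz N b
end

section
/- For r ∈ ℝ, r ≠ 0, and τ in the upper half-plane, ∫_{-∞}^{∞} e^{πiτw²}/(w + ir) dw = -πr·∫_{0}^{i∞} e^{πir²z}/√(-i(z+τ)) dz, where the second integral is taken along the positive imaginary axis and √ denotes the principal branch. -/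
/-!
Since `e^{πiτw²}` is even in `w`, pairing `w` with `-w` replaces `1 / (w + ir)` by
`-ir / (w² + r²)`. Writing `1 / (w² + r²) = π ∫₀^∞ e^{-π(w² + r²)t} dt` and exchanging the
integrals, the inner integral is the Gaussian `∫ e^{-π(t - iτ)w²} dw = (t - iτ)^{-1/2}`, and
`t - iτ = -i(it + τ)` has positive real part, so the principal branches agree.
-/

open Complex MeasureTheory Set Real

lemma ofReal_sq_add_ofReal_sq_ne_zero {r : ℝ} (hr : r ≠ 0) (w : ℝ) :
    (w : ℂ) ^ 2 + (r : ℂ) ^ 2 ≠ 0 := by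
  exact_mod_cast (by positivity : 0 < w ^ 2 + r ^ 2).ne'

lemma ofReal_add_I_mul_ne_zero {r : ℝ} (hr : r ≠ 0) (w : ℝ) : (w : ℂ) + I * r ≠ 0 := by
  intro h
  exact hr (by simpa using congrArg Complex.im h)

lemma norm_inv_ofReal_add_I_mul_le {r : ℝ} (hr : r ≠ 0) (w : ℝ) :
    ‖((w : ℂ) + I * r)⁻¹‖ ≤ |r|⁻¹ := by
  rw [norm_inv]
  refine inv_anti₀ (abs_pos.2 hr) ?_
  simpa using abs_im_le_norm ((w : ℂ) + I * r)

lemma MeasureTheory.Integrable.div_ofReal_add_I_mul {φ : ℝ → ℂ} (hφ : Integrable φ) {r : ℝ}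
    (hr : r ≠ 0) :
    Integrable fun w : ℝ ↦ φ w / (w + I * r) := by
  simp_rw [div_eq_inv_mul]
  refine hφ.bdd_mul (c := |r|⁻¹) ?_ (.of_forall (norm_inv_ofReal_add_I_mul_le hr))
  exact ((continuous_ofReal.add continuous_const).inv₀
    (ofReal_add_I_mul_ne_zero hr)).aestronglyMeasurable

lemma inv_ofReal_add_I_mul_add_inv_neg {r : ℝ} (hr : r ≠ 0) (w : ℝ) :
    ((w : ℂ) + I * r)⁻¹ + ((-w : ℝ) + I * r)⁻¹ = -2 * I * r / (w ^ 2 + r ^ 2) := by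
  have h₁ := ofReal_add_I_mul_ne_zero hr w
  have h₂ := ofReal_add_I_mul_ne_zero hr (-w)
  have h₃ := ofReal_sq_add_ofReal_sq_ne_zero hr w
  push_cast at h₂ ⊢
  field_simp
  linear_combination 2 * I * r ^ 3 * I_sq

theorem integral_div_ofReal_add_I_mul_of_even {φ : ℝ → ℂ} (hφ : Integrable φ)
    (heven : ∀ w, φ (-w) = φ w) {r : ℝ} (hr : r ≠ 0) :
    ∫ w : ℝ, φ w / (w + I * r) = -I * r * ∫ w : ℝ, φ w / (w ^ 2 + r ^ 2) := by
  set f : ℝ → ℂ := fun w ↦ φ w / (w + I * r)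
  have hf : Integrable f := hφ.div_ofReal_add_I_mul hr
  have hsum : ∀ w, f w + f (-w) = -2 * I * r * (φ w / (w ^ 2 + r ^ 2)) := fun w ↦ by
    simp only [f, heven, div_eq_mul_inv, ← mul_add, inv_ofReal_add_I_mul_add_inv_neg hr]
    ring
  calc ∫ w, f w = (∫ w, (f w + f (-w))) / 2 := by
        rw [integral_add hf hf.comp_neg, integral_neg_eq_self]; ring
    _ = (∫ w, -2 * I * r * (φ w / (w ^ 2 + r ^ 2))) / 2 := by simp_rw [hsum]
    _ = -I * r * ∫ w : ℝ, φ w / (w ^ 2 + r ^ 2) := by rw [integral_const_mul]; ring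

lemma integral_cexp_neg_mul_Ioi {a : ℂ} (ha : 0 < a.re) :
    ∫ t in Ioi (0 : ℝ), cexp (-a * t) = a⁻¹ := by
  rw [integral_exp_mul_complex_Ioi (by simpa using ha)]
  simp

lemma integrable_cexp_neg_mul_sq_mul_cexp_neg_mul {b : ℂ} (hb : 0 < b.re) {r : ℝ} (hr : r ≠ 0) :
    Integrable (fun p : ℝ × ℝ ↦ cexp (-b * p.1 ^ 2) * cexp (-(π * (p.1 ^ 2 + r ^ 2)) * p.2))
      (volume.prod (volume.restrict (Ioi 0))) := by
  have hbound : Integrable (fun p : ℝ × ℝ ↦ rexp (-b.re * p.1 ^ 2) * rexp (-(π * r ^ 2) * p.2))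
      (volume.prod (volume.restrict (Ioi 0))) :=
    (integrable_exp_neg_mul_sq hb).mul_prod (exp_neg_integrableOn_Ioi 0 (by positivity))
  refine hbound.mono' (by fun_prop) ?_
  rw [← Measure.restrict_univ (μ := volume), Measure.prod_restrict,
    ae_restrict_iff' (MeasurableSet.univ.prod measurableSet_Ioi)]
  refine .of_forall fun ⟨w, t⟩ ⟨_, (ht : 0 < t)⟩ ↦ ?_
  rw [norm_mul, norm_exp, norm_exp]
  gcongr
  · simp [← ofReal_pow]
  · simp only [← ofReal_pow, ← ofReal_add, ← ofReal_mul, ← ofReal_neg, ofReal_re]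
    nlinarith [mul_nonneg (mul_nonneg pi_pos.le (sq_nonneg w)) ht.le]

theorem integral_cexp_neg_mul_sq_div_sq_add_sq {b : ℂ} (hb : 0 < b.re) {r : ℝ} (hr : r ≠ 0) :
    ∫ w : ℝ, cexp (-b * w ^ 2) / (w ^ 2 + r ^ 2) =
      π * ∫ t in Ioi (0 : ℝ), cexp (-(π * r ^ 2) * t) * (π / (b + π * t)) ^ (1 / 2 : ℂ) := by
  have hschwinger : ∀ w : ℝ, ((w : ℂ) ^ 2 + r ^ 2)⁻¹ =
      π * ∫ t in Ioi (0 : ℝ), cexp (-(π * (w ^ 2 + r ^ 2)) * t) := fun w ↦ by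
    have hpos : 0 < (π * ((w : ℂ) ^ 2 + r ^ 2)).re := by
      simp only [← ofReal_pow, ← ofReal_add, ← ofReal_mul, ofReal_re]; positivity
    rw [integral_cexp_neg_mul_Ioi hpos, mul_inv, ← mul_assoc,
      mul_inv_cancel₀ (ofReal_ne_zero.2 pi_ne_zero), one_mul]
  have hgauss : ∀ t ∈ Ioi (0 : ℝ), ∫ w : ℝ, cexp (-b * w ^ 2) * cexp (-(π * (w ^ 2 + r ^ 2)) * t)
      = cexp (-(π * r ^ 2) * t) * (π / (b + π * t)) ^ (1 / 2 : ℂ) := fun t (ht : 0 < t) ↦ by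
    have hpos : 0 < (b + π * t).re := by
      simp only [add_re, ← ofReal_mul, ofReal_re]; positivity
    simp_rw [← Complex.exp_add, show ∀ w : ℂ, -b * w ^ 2 + -(π * (w ^ 2 + r ^ 2)) * t
      = -(π * r ^ 2) * t + -(b + π * t) * w ^ 2 from fun w ↦ by ring, Complex.exp_add]
    rw [integral_const_mul, integral_gaussian_complex hpos]
  calc ∫ w : ℝ, cexp (-b * w ^ 2) / (w ^ 2 + r ^ 2)
      = ∫ w : ℝ, π * ∫ t in Ioi (0 : ℝ),
          cexp (-b * w ^ 2) * cexp (-(π * (w ^ 2 + r ^ 2)) * t) := by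
        congr 1 with w
        rw [div_eq_mul_inv, hschwinger, integral_const_mul]; ring
    _ = π * ∫ t in Ioi (0 : ℝ), ∫ w : ℝ,
          cexp (-b * w ^ 2) * cexp (-(π * (w ^ 2 + r ^ 2)) * t) := by
        rw [integral_const_mul,
          integral_integral_swap (integrable_cexp_neg_mul_sq_mul_cexp_neg_mul hb hr)]
    _ = _ := by rw [setIntegral_congr_fun measurableSet_Ioi hgauss]

lemma cexp_mul_cpow_eq_div_cpow {τ : ℂ} (hτ : 0 < τ.im) (r : ℝ) {t : ℝ} (ht : 0 ≤ t) :
    cexp (-(π * r ^ 2) * t) * (π / (-(π * I * τ) + π * t)) ^ (1 / 2 : ℂ) =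
      cexp (π * I * r ^ 2 * (I * t)) / (-I * (I * t + τ)) ^ (1 / 2 : ℂ) := by
  have hz : -I * (I * t + τ) = t - I * τ := by linear_combination (-(t : ℂ)) * I_sq
  have hre : 0 < (-I * (I * t + τ)).re := by
    simp only [hz, sub_re, ofReal_re, mul_re, I_re, I_im, zero_mul, one_mul, zero_sub,
      sub_neg_eq_add]
    linarith
  have hinv : (π : ℂ) / (-(π * I * τ) + π * t) = (-I * (I * t + τ))⁻¹ := by
    rw [hz, show -(π * I * τ) + π * t = (π : ℂ) * (t - I * τ) by ring,
      div_mul_cancel_left₀ (ofReal_ne_zero.2 pi_ne_zero)]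
  rw [hinv, inv_cpow _ _ (arg_lt_pi_iff.2 (.inl hre.le)).ne, ← div_eq_mul_inv]
  congr 2
  linear_combination -(π * r ^ 2 * t : ℂ) * I_sq

/-- Lemma 1.18 of Zwegers: for real `r ≠ 0` and `τ` in the upper half-plane,
`∫_{-∞}^{∞} e^{πiτw²}/(w+ir) dw = -πr ∫_0^{i∞} e^{πir²z}/√(-i(z+τ)) dz`,
the second integral taken along the positive imaginary axis (`z = it`, `t > 0`),
with the principal branch of the square root. -/
theorem stmt8 (r : ℝ) (hr : r ≠ 0) (τ : ℂ) (hτ : 0 < τ.im) :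
    (∫ w : ℝ, Complex.exp (Real.pi * Complex.I * τ * (w : ℂ)^2) / ((w : ℂ) + Complex.I * r))
      = -(Real.pi : ℂ) * r *
        ∫ t in Set.Ioi (0 : ℝ),
          Complex.I * Complex.exp (Real.pi * Complex.I * (r : ℂ)^2 * (Complex.I * t)) /
            (-Complex.I * (Complex.I * t + τ)) ^ ((1 : ℂ)/2) := by
  have hb : 0 < (-(π * I * τ)).re := by simpa using mul_pos pi_pos hτ
  have hschwinger := integral_cexp_neg_mul_sq_div_sq_add_sq hb hr
  have hint := integrable_cexp_neg_mul_sq hb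
  simp only [neg_neg] at hschwinger hint
  rw [integral_div_ofReal_add_I_mul_of_even hint (fun w ↦ by simp) hr, hschwinger,
    setIntegral_congr_fun measurableSet_Ioi fun _ ht ↦ cexp_mul_cpow_eq_div_cpow hτ r (le_of_lt ht)]
  simp_rw [mul_div_assoc]
  rw [integral_const_mul]
  ring
end
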